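/- Let V be a finite set of size k ≥ 2 and let r_1, ..., r_n be independent uniformly random elements of V. Then the probability that the set {r_1, ..., r_n} is not all of V is at least k(1-1/k)^n (1 - k(1-1/(k-1))^n). -/

import Mathlib

/-!
Bonferroni's inequality at second order, `𝟙[m ≥ 1] ≥ m - m(m - 1)`, applied pointwise to the
number `m` of uncovered elements and summed over all `k^n` sample sequences. The first sum counts
pairs (sequence, uncovered element), i.e. `k(k - 1)^n`; the second counts pairs (sequence,
ordered pair of distinct uncovered elements), i.e. `k(k - 1)(k - 2)^n`. Dividing by `k^n` and
bounding `k(k - 1) ≤ k^2` gives the claim.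
-/

open scoped Classical
open Finset

theorem card_le_one_add_card_offDiag {α : Type*} (s : Finset α) :
    #s ≤ (if s.Nonempty then 1 else 0) + #s.offDiag := by
  rw [offDiag_card]
  rcases s.eq_empty_or_nonempty with rfl | hs
  · simp
  · rw [if_pos hs]
    have := hs.card_pos
    nlinarith [Nat.sub_add_cancel (Nat.le_mul_self #s)]

section Uncovered

variable {ι V : Type*} [Fintype ι] [Fintype V]

noncomputable def uncovered (r : ι → V) : Finset V := (univ.image r)ᶜ

theorem mem_uncovered {r : ι → V} {v : V} : v ∈ uncovered r ↔ ∀ i, r i ≠ v := by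
  simp [uncovered]

theorem uncovered_nonempty_iff {r : ι → V} : (uncovered r).Nonempty ↔ univ.image r ≠ univ := by
  rw [nonempty_iff_ne_empty, uncovered, Ne, compl_eq_empty_iff]

variable [DecidableEq ι]

theorem card_filter_subset_uncovered (s : Finset V) :
    #{r : ι → V | s ⊆ uncovered r} = (Fintype.card V - #s) ^ Fintype.card ι := by
  have : ({r : ι → V | s ⊆ uncovered r} : Finset _) = Fintype.piFinset fun _ => sᶜ := by
    ext r
    simp only [mem_filter, mem_univ, true_and, Fintype.mem_piFinset, mem_compl]
    exact ⟨fun h i hi => mem_uncovered.1 (h hi) i rfl,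
      fun h v hv => mem_uncovered.2 fun i hi => h i (hi ▸ hv)⟩
  rw [this, Fintype.card_piFinset, prod_const, card_univ, card_compl]

theorem sum_card_uncovered :
    ∑ r : ι → V, #(uncovered r) = Fintype.card V * (Fintype.card V - 1) ^ Fintype.card ι := by
  calc ∑ r : ι → V, #(uncovered r)
      = ∑ v : V, #{r : ι → V | {v} ⊆ uncovered r} := by
        simp_rw [singleton_subset_iff]
        conv_lhs => enter [2, r]; rw [← filter_univ_mem (uncovered r)]
        exact sum_card_bipartiteAbove_eq_sum_card_bipartiteBelow _
    _ = _ := by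
        simp only [card_filter_subset_uncovered, card_singleton, sum_const, card_univ, smul_eq_mul]

theorem sum_card_offDiag_uncovered :
    ∑ r : ι → V, #(uncovered r).offDiag
      = Fintype.card V * (Fintype.card V - 1) * (Fintype.card V - 2) ^ Fintype.card ι := by
  calc ∑ r : ι → V, #(uncovered r).offDiag
      = ∑ p ∈ (univ : Finset V).offDiag, #{r : ι → V | {p.1, p.2} ⊆ uncovered r} := by
        have h (r : ι → V) : (uncovered r).offDiag
            = (univ : Finset V).offDiag.filter fun p => {p.1, p.2} ⊆ uncovered r := by
          ext p
          simp only [mem_offDiag, mem_filter, mem_univ, true_and, insert_subset_iff,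
            singleton_subset_iff]
          tauto
        simp_rw [h]
        exact sum_card_bipartiteAbove_eq_sum_card_bipartiteBelow _
    _ = ∑ p ∈ (univ : Finset V).offDiag, (Fintype.card V - 2) ^ Fintype.card ι := by
        refine sum_congr rfl fun p hp => ?_
        rw [card_filter_subset_uncovered, card_pair (mem_offDiag.1 hp).2.2]
    _ = _ := by simp [offDiag_card, Nat.mul_sub_one]

theorem card_mul_pred_pow_le_card_uncovered_nonempty_add :
    Fintype.card V * (Fintype.card V - 1) ^ Fintype.card ι
      ≤ #{r : ι → V | (uncovered r).Nonempty}
        + Fintype.card V * (Fintype.card V - 1) * (Fintype.card V - 2) ^ Fintype.card ι := by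
  rw [← sum_card_uncovered, ← sum_card_offDiag_uncovered, card_filter, ← sum_add_distrib]
  exact sum_le_sum fun r _ => card_le_one_add_card_offDiag _

end Uncovered

/-- Coupon collector lower bound: i.i.d. uniform samples `r : Fin n → V` from a
`k`-element set `V` fail to cover `V` with probability at least
`k(1-1/k)^n (1 - k(1-1/(k-1))^n)`. Probabilities are formalized by counting
over the uniform space of all `k^n` sample sequences. -/
theorem stmt0 (V : Type) [Fintype V] (k n : ℕ) (hk : 2 ≤ k)
    (hcard : Fintype.card V = k) :
    ((Finset.univ.filter
        (fun r : Fin n → V => Finset.image r Finset.univ ≠ Finset.univ)).card : ℝ)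
      / (k : ℝ) ^ n
    ≥ (k : ℝ) * (1 - 1 / k) ^ n * (1 - (k : ℝ) * (1 - 1 / ((k : ℝ) - 1)) ^ n) := by
  have hcount := card_mul_pred_pow_le_card_uncovered_nonempty_add (ι := Fin n) (V := V)
  simp only [Fintype.card_fin, uncovered_nonempty_iff, hcard] at hcount
  have hcount' : (k : ℝ) * (k - 1) ^ n
      ≤ #{r : Fin n → V | univ.image r ≠ univ} + k * (k - 1) * (k - 2) ^ n := by
    have := (Nat.cast_le (α := ℝ)).2 hcount
    push_cast [Nat.cast_sub (by omega : 1 ≤ k), Nat.cast_sub hk] at this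
    exact this
  have hK : (2 : ℝ) ≤ k := by exact_mod_cast hk
  have hk0 : (k : ℝ) ≠ 0 := by positivity
  have hk1 : (k : ℝ) - 1 ≠ 0 := by linarith
  have hrhs : (k : ℝ) * (1 - 1 / k) ^ n * (1 - k * (1 - 1 / ((k : ℝ) - 1)) ^ n)
      = (k * (k - 1) ^ n - k ^ 2 * (k - 2) ^ n) / k ^ n := by
    rw [one_sub_div hk0, one_sub_div hk1, div_pow, div_pow]
    field_simp
    ring
  rw [hrhs, ge_iff_le, div_le_div_iff_of_pos_right (by positivity)]
  nlinarith [pow_nonneg (by linarith : (0 : ℝ) ≤ k - 2) n]
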